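/- Let 0 < r < s, and set r′ = inf{‖u‖_∞ : u ∈ H, μ(u) ≥ r} and s′ = sup{‖u‖_∞ : u ∈ H, μ(u) ≤ s}. Assume: (1) for every k ∈ {1,...,T} and every ε > 0 there exists K > 0 such that F(k,t) ≤ ε·|t|^{p⁻} whenever |t| > K (i.e. limsup_{|t|→∞} F(k,t)/|t|^{p⁻} ≤ 0); (2) there exist t₁,...,t_T ∈ ℝ with Σ_{k=1}^{T} F(k,t_k) > Σ_{k=1}^{T} sup_{|t|≤s′} F(k,t); (3) for every k ∈ {1,...,T}, sup_{r′≤|t|≤s′} F(k,t) ≤ −Σ_{h≠k} sup_{|t|≤s′} F(h,t). Then there exists λ* > 0 such that E_{λ*} has at least three critical points in H, at least two of which are nonzero. -/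

import Mathlib

/-- μ(u) = Σ_{k=1}^{T+1} (1/p(k−1))|Δu(k−1)|^{p(k−1)}. -/
noncomputable def muF (T : ℕ) (p : ℕ → ℝ) (u : ℕ → ℝ) : ℝ :=
  ∑ k ∈ Finset.Icc 1 (T + 1), (1 / p (k - 1)) * |u k - u (k - 1)| ^ p (k - 1)

/-- F(k,t) = ∫₀ᵗ f(k,τ) dτ. -/
noncomputable def Fint (f : ℕ → ℝ → ℝ) (k : ℕ) (t : ℝ) : ℝ :=
  ∫ τ in (0:ℝ)..t, f k τ

/-- ‖u‖_∞ = max_{1 ≤ k ≤ T} |u(k)| (as the supremum of the corresponding set). -/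
noncomputable def supNorm (T : ℕ) (u : ℕ → ℝ) : ℝ :=
  sSup {x : ℝ | ∃ k, 1 ≤ k ∧ k ≤ T ∧ x = |u k|}

/-- sup_{|t| ≤ σ} F(k,t). -/
noncomputable def supFle (f : ℕ → ℝ → ℝ) (k : ℕ) (σ : ℝ) : ℝ :=
  sSup {y : ℝ | ∃ t : ℝ, |t| ≤ σ ∧ y = Fint f k t}

/-- sup_{ρ ≤ |t| ≤ σ} F(k,t). -/
noncomputable def supFbetween (f : ℕ → ℝ → ℝ) (k : ℕ) (ρ σ : ℝ) : ℝ :=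
  sSup {y : ℝ | ∃ t : ℝ, ρ ≤ |t| ∧ |t| ≤ σ ∧ y = Fint f k t}

/-- r′ = inf{‖u‖_∞ : u ∈ H, μ(u) ≥ r}. -/
noncomputable def rPrime (T : ℕ) (p : ℕ → ℝ) (r : ℝ) : ℝ :=
  sInf {x : ℝ | ∃ u : ℕ → ℝ, u 0 = 0 ∧ u (T + 1) = 0 ∧ r ≤ muF T p u ∧ x = supNorm T u}

/-- s′ = sup{‖u‖_∞ : u ∈ H, μ(u) ≤ s}. -/
noncomputable def sPrime (T : ℕ) (p : ℕ → ℝ) (s : ℝ) : ℝ :=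
  sSup {x : ℝ | ∃ u : ℕ → ℝ, u 0 = 0 ∧ u (T + 1) = 0 ∧ muF T p u ≤ s ∧ x = supNorm T u}

/-- `u ∈ H` is a critical point of `E_λ = μ + λ·J`:
`Σ_{k=1}^{T+1} |Δu(k−1)|^{p(k−1)−2}Δu(k−1)·Δv(k−1) = λ·Σ_{k=1}^{T} f(k,u(k))·v(k)` for all `v ∈ H`. -/
def IsCriticalPoint (T : ℕ) (p : ℕ → ℝ) (f : ℕ → ℝ → ℝ) (lam : ℝ) (u : ℕ → ℝ) : Prop :=
  u 0 = 0 ∧ u (T + 1) = 0 ∧ ∀ v : ℕ → ℝ, v 0 = 0 → v (T + 1) = 0 →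
    ∑ k ∈ Finset.Icc 1 (T + 1),
        |u k - u (k - 1)| ^ (p (k - 1) - 2) * (u k - u (k - 1)) * (v k - v (k - 1))
      = lam * ∑ k ∈ Finset.Icc 1 T, f k (u k) * v k

/-- `u` and `w` are distinct as elements of `H`. -/
def DistinctH (T : ℕ) (u w : ℕ → ℝ) : Prop :=
  ∃ k, 1 ≤ k ∧ k ≤ T ∧ u k ≠ w k

/-- `u ∈ H` is nonzero. -/
def NonzeroH (T : ℕ) (u : ℕ → ℝ) : Prop :=
  ∃ k, 1 ≤ k ∧ k ≤ T ∧ u k ≠ 0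

/-!
On the model space `ℝ^T` of `H`, `E_λ = μ - λ Σ F(k, ·)` is `C¹`, and by (1) together with
`p⁻ ≤ p(k)` it dominates `μ / 2 - C`, so its sublevel sets are compact. By (3), `Σ F(k, u k) ≤ 0`
on the annulus `r ≤ μ ≤ s`, hence `E_λ ≥ r` there; by (2), `λ` can be chosen so that some `w`
has `E_λ w < E_λ u` whenever `μ u ≤ s`. The minimiser of `E_λ` on `{μ ≤ s}` then has `E_λ ≤ 0`,
so it lies in `{μ < r}` and is a local minimum; the global minimiser lies in `{μ > s}`. Every path
between them crosses `{μ = r}`, where `E_λ ≥ r > 0`, and a finite-dimensional mountain pass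
lemma, proved by iterating a cut-off gradient descent step, yields a third critical point at a
positive level.
-/

open Set Filter InnerProductSpace
open scoped Gradient

section MountainPass

variable {V : Type*} [NormedAddCommGroup V] [InnerProductSpace ℝ V] [FiniteDimensional ℝ V]
  {E : V → ℝ}

lemma norm_gradient_eq_norm_fderiv (x : V) : ‖∇ E x‖ = ‖fderiv ℝ E x‖ := by
  rw [← toDual_gradient, LinearIsometryEquiv.norm_map]

lemma fderiv_apply_gradient (x : V) : fderiv ℝ E x (∇ E x) = ‖∇ E x‖ ^ 2 := by
  rw [← toDual_gradient, toDual_apply_apply, real_inner_self_eq_norm_sq]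

lemma ContDiff.continuous_gradient (hE : ContDiff ℝ 1 E) : Continuous (∇ E) :=
  (toDual ℝ V).symm.continuous.comp (hE.continuous_fderiv one_ne_zero)

lemma exists_descent_along_gradient (hE : ContDiff ℝ 1 E) {K : Set V} (hK : IsCompact K)
    (hcrit : ∀ x ∈ K, fderiv ℝ E x ≠ 0) :
    ∃ h > 0, ∃ η > 0, ∀ x ∈ K, ∀ τ ∈ Icc 0 h, E (x - τ • ∇ E x) ≤ E x - τ * η := by
  rcases K.eq_empty_or_nonempty with rfl | hne
  · exact ⟨1, one_pos, 1, one_pos, by simp⟩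
  have hE' : Continuous (fderiv ℝ E) := hE.continuous_fderiv one_ne_zero
  obtain ⟨x₀, hx₀, hmin⟩ := hK.exists_isMinOn hne (continuous_norm.comp hE').continuousOn
  set m := ‖fderiv ℝ E x₀‖
  have hm : 0 < m := norm_pos_iff.2 (hcrit x₀ hx₀)
  obtain ⟨L, hL⟩ := hK.exists_bound_of_continuousOn hE'.continuousOn
  have hL₀ : 0 ≤ L := (norm_nonneg _).trans (hL x₀ hx₀)
  obtain ⟨δ, hδ, hunif⟩ := Metric.mem_uniformity_dist.1
    (hK.uniformContinuousAt_of_continuousAt (fderiv ℝ E) (fun x _ => hE'.continuousAt)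
      (Metric.dist_mem_uniformity (half_pos hm)))
  refine ⟨δ / (L + 1), by positivity, m ^ 2 / 2, by positivity, fun x hx τ hτ => ?_⟩
  set g := ∇ E x
  have hg : m ≤ ‖g‖ := (norm_gradient_eq_norm_fderiv x).symm ▸ hmin hx
  have hgL : ‖g‖ ≤ L := (norm_gradient_eq_norm_fderiv x).symm ▸ hL x hx
  have hstep : ‖τ • g‖ < δ := by
    rw [norm_smul, Real.norm_of_nonneg hτ.1]
    calc τ * ‖g‖ ≤ δ / (L + 1) * L := mul_le_mul hτ.2 hgL (norm_nonneg _) (by positivity)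
      _ < δ := by rw [div_mul_eq_mul_div, div_lt_iff₀ (by positivity)]; nlinarith
  have hmvt := (convex_ball x δ).norm_image_sub_le_of_norm_fderiv_le'
    (fun z _ => (hE.differentiable one_ne_zero) z)
    (fun z hz => by
      have := hunif (Metric.mem_ball'.1 hz) hx
      simp only [mem_ofPred_eq] at this
      rw [dist_comm, dist_eq_norm] at this
      exact this.le)
    (Metric.mem_ball_self hδ) (by simpa [dist_eq_norm] using hstep : x - τ • g ∈ Metric.ball x δ)
  have hlin : fderiv ℝ E x (x - τ • g - x) = -(τ * ‖g‖ ^ 2) := by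
    rw [sub_sub_cancel_left, map_neg, map_smul, fderiv_apply_gradient, smul_eq_mul]
  rw [hlin, sub_sub_cancel_left, norm_neg, norm_smul, Real.norm_of_nonneg hτ.1] at hmvt
  have hle : E (x - τ • g) - E x + τ * ‖g‖ ^ 2 ≤ m / 2 * (τ * ‖g‖) := by
    simpa only [sub_neg_eq_add] using (le_abs_self _).trans hmvt
  have key : 0 ≤ τ * ((‖g‖ - m) * (‖g‖ + m / 2)) :=
    mul_nonneg hτ.1 (mul_nonneg (sub_nonneg.2 hg) (by positivity))
  linear_combination hle + key

lemma exists_gradient_step (hE : ContDiff ℝ 1 E) (hsub : ∀ M, IsCompact {x | E x ≤ M})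
    {c₀ c : ℝ} (hc : c₀ < c) (hcrit : ∀ x, fderiv ℝ E x = 0 → E x ≤ c₀) (M : ℝ) :
    ∃ Φ : V → V, Continuous Φ ∧ (∀ x, E x ≤ c₀ → Φ x = x) ∧
      (∀ x, E x ≤ M → E (Φ x) ≤ E x) ∧ ∃ η > 0, ∀ x, c ≤ E x → E x ≤ M → E (Φ x) ≤ E x - η := by
  obtain ⟨c₁, hc₀₁, hc₁c⟩ := exists_between hc
  have hK : IsCompact {x | E x ≤ M ∧ c₁ ≤ E x} :=
    (hsub M).inter_right (isClosed_le continuous_const hE.continuous)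
  obtain ⟨h, hh, η, hη, hdesc⟩ := exists_descent_along_gradient hE hK
    fun x hx h0 => (hc₀₁.trans_le hx.2).not_ge (hcrit x h0)
  obtain ⟨ψ, hψ₀, hψ₁, hψmem⟩ := exists_continuous_zero_one_of_isClosed
    (isClosed_le hE.continuous continuous_const) (isClosed_le continuous_const hE.continuous)
    (disjoint_left.2 fun x (h₁ : E x ≤ c₁) (h₂ : c ≤ E x) => by linarith)
  set Φ : V → V := fun x => x - (h * ψ x) • ∇ E x
  have hfix : ∀ x, ψ x = 0 → Φ x = x := fun x hx => by simp [Φ, hx]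
  have hdec : ∀ x, E x ≤ M → E (Φ x) ≤ E x - h * ψ x * η := fun x hx => by
    by_cases h0 : ψ x = 0
    · simp [hfix x h0, h0]
    have hc₁ : c₁ ≤ E x := by
      by_contra! hlt
      exact h0 (hψ₀ (show E x ≤ c₁ from hlt.le))
    have hτ : h * ψ x ∈ Icc 0 h :=
      ⟨mul_nonneg hh.le (hψmem x).1, mul_le_of_le_one_right hh.le (hψmem x).2⟩
    simpa only [mul_assoc] using hdesc x ⟨hx, hc₁⟩ _ hτ
  refine ⟨Φ, continuous_id.sub ((continuous_const.mul ψ.continuous).smul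
      hE.continuous_gradient), fun x hx => hfix x (hψ₀ (show E x ≤ c₁ by linarith)),
    fun x hx => ?_, h * η, by positivity, fun x hcx hx => ?_⟩
  · nlinarith [hdec x hx, mul_nonneg (mul_nonneg hh.le (hψmem x).1) hη.le]
  · simpa [hψ₁ (show c ≤ E x from hcx), mul_assoc] using hdec x hx

lemma exists_iterate_le {X : Type*} {E : X → ℝ} {Φ : X → X} {M c η : ℝ} (hη : 0 < η)
    (hmono : ∀ x, E x ≤ M → E (Φ x) ≤ E x)
    (hdec : ∀ x, c ≤ E x → E x ≤ M → E (Φ x) ≤ E x - η) :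
    ∃ n : ℕ, ∀ x, E x ≤ M → E (Φ^[n] x) ≤ c := by
  have key : ∀ n : ℕ, ∀ x, E x ≤ M → E (Φ^[n] x) ≤ E x ∧ E (Φ^[n] x) ≤ max c (E x - n * η) := by
    intro n x hx
    induction n with
    | zero => simp
    | succ n ih =>
      rw [Function.iterate_succ_apply']
      have hM := ih.1.trans hx
      refine ⟨(hmono _ hM).trans ih.1, ?_⟩
      rcases le_or_gt c (E (Φ^[n] x)) with hc | hc
      · have := hdec _ hc hM
        rcases le_max_iff.1 ih.2 with h | h
        · exact le_max_of_le_left (by linarith [hmono _ hM])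
        · push_cast; exact le_max_of_le_right (by linarith)
      · exact le_max_of_le_left ((hmono _ hM).trans hc.le)
  obtain ⟨n, hn⟩ := exists_nat_gt ((M - c) / η)
  refine ⟨n, fun x hx => (key n x hx).2.trans (max_le le_rfl ?_)⟩
  rw [div_lt_iff₀ hη] at hn
  linarith

lemma exists_deformation (hE : ContDiff ℝ 1 E) (hsub : ∀ M, IsCompact {x | E x ≤ M})
    {c₀ c : ℝ} (hc : c₀ < c) (hcrit : ∀ x, fderiv ℝ E x = 0 → E x ≤ c₀) (M : ℝ) :
    ∃ Φ : V → V, Continuous Φ ∧ (∀ x, E x ≤ c₀ → Φ x = x) ∧ ∀ x, E x ≤ M → E (Φ x) < c := by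
  obtain ⟨Φ, hΦ, hfix, hmono, η, hη, hdec⟩ :=
    exists_gradient_step hE hsub (by linarith : c₀ < (c₀ + c) / 2) hcrit M
  obtain ⟨n, hn⟩ := exists_iterate_le hη hmono hdec
  exact ⟨Φ^[n], hΦ.iterate n, fun x hx => Function.iterate_fixed (hfix x hx) n,
    fun x hx => (hn x hx).trans_lt (by linarith)⟩

theorem exists_fderiv_eq_zero_of_mountain_pass (hE : ContDiff ℝ 1 E)
    (hsub : ∀ M, IsCompact {x | E x ≤ M}) {a b : V} {c₀ c : ℝ} (hc : c₀ < c)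
    (ha : E a ≤ c₀) (hb : E b ≤ c₀) (hpath : ∀ γ : Path a b, ∃ t, c ≤ E (γ t)) :
    ∃ x, fderiv ℝ E x = 0 ∧ c₀ < E x := by
  by_contra! hcrit
  let γ := PathConnectedSpace.somePath a b
  obtain ⟨M, hM⟩ := (isCompact_range (hE.continuous.comp γ.continuous)).bddAbove
  obtain ⟨Φ, hΦ, hfix, hlow⟩ := exists_deformation hE hsub hc hcrit M
  obtain ⟨t, ht⟩ := hpath ((γ.map hΦ).cast (hfix a ha).symm (hfix b hb).symm)
  exact (hlow _ (hM ⟨t, rfl⟩)).not_ge ht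

theorem exists_three_critical_points (hE : ContDiff ℝ 1 E) (hsub : ∀ M, IsCompact {x | E x ≤ M})
    {μ : V → ℝ} (hμ : Continuous μ) {r s : ℝ} (hμs : IsCompact {x | μ x ≤ s}) (hr : 0 < r)
    (hrs : r ≤ s) (hE0 : E 0 = 0) (hμ0 : μ 0 ≤ s)
    (hann : ∀ x, r ≤ μ x → μ x ≤ s → r ≤ E x) (hlow : ∃ w, ∀ x, μ x ≤ s → E w < E x) :
    ∃ x₁ x₂ x₃, fderiv ℝ E x₁ = 0 ∧ fderiv ℝ E x₂ = 0 ∧ fderiv ℝ E x₃ = 0 ∧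
      E x₂ < E x₁ ∧ E x₁ ≤ 0 ∧ 0 < E x₃ := by
  obtain ⟨x₁, hx₁s, hx₁min⟩ := hμs.exists_isMinOn ⟨0, hμ0⟩ hE.continuous.continuousOn
  have hEx₁ : E x₁ ≤ 0 := hE0 ▸ hx₁min hμ0
  have hμx₁ : μ x₁ < r := lt_of_not_ge fun h => (hann x₁ h hx₁s).not_gt (hEx₁.trans_lt hr)
  have hloc₁ : IsLocalMin E x₁ := hx₁min.isLocalMin <|
    mem_of_superset ((isOpen_lt hμ continuous_const).mem_nhds (hμx₁.trans_le hrs))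
      fun _ h => le_of_lt (α := ℝ) h
  obtain ⟨w, hw⟩ := hlow
  obtain ⟨x₂, hx₂⟩ := hE.continuous.exists_forall_le' w <|
    mem_of_superset (hsub (E w)).compl_mem_cocompact fun _ hx => le_of_lt (not_le.1 hx)
  have hEx₂ : E x₂ < E x₁ := (hx₂ w).trans_lt (hw x₁ hx₁s)
  have hμx₂ : s < μ x₂ := lt_of_not_ge fun h => (hw x₂ h).not_ge (hx₂ w)
  obtain ⟨x₃, hx₃, hEx₃⟩ := exists_fderiv_eq_zero_of_mountain_pass hE hsub hr hEx₁
    (hEx₂.le.trans hEx₁) fun γ => by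
      obtain ⟨t, ht⟩ := intermediate_value_univ 0 1 (hμ.comp γ.continuous)
        ⟨by simpa using hμx₁.le, by simpa using hrs.trans hμx₂.le⟩
      exact ⟨t, hann _ ht.ge (ht.le.trans hrs)⟩
  exact ⟨x₁, x₂, x₃, hloc₁.fderiv_eq_zero,
    IsLocalMin.fderiv_eq_zero (Eventually.of_forall hx₂), hx₃, hEx₂, hEx₁, hEx₃⟩

end MountainPass

section Estimates

variable {T : ℕ} {p : ℕ → ℝ}

lemma muF_nonneg (hp : ∀ k ≤ T, 0 < p k) (u : ℕ → ℝ) : 0 ≤ muF T p u :=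
  Finset.sum_nonneg fun k hk => by
    have := hp (k - 1) (by simp at hk; omega)
    positivity

lemma abs_le_sum_abs_sub {u : ℕ → ℝ} (hu : u 0 = 0) {k n : ℕ} (hk : k ≤ n) :
    |u k| ≤ ∑ j ∈ Finset.Icc 1 n, |u j - u (j - 1)| := by
  induction n generalizing k with
  | zero => simp [Nat.le_zero.1 hk, hu]
  | succ n ih =>
    rw [Finset.sum_Icc_succ_top (by omega), Nat.add_sub_cancel]
    rcases hk.lt_or_eq with hk | rfl
    · linarith [ih (k := k) (by omega), abs_nonneg (u (n + 1) - u n)]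
    · linarith [ih le_rfl, abs_sub_abs_le_abs_sub (u (n + 1)) (u n)]

lemma rpow_le_one_add_rpow {a q q' : ℝ} (ha : 0 ≤ a) (hq : 0 ≤ q) (hqq' : q ≤ q') :
    a ^ q ≤ 1 + a ^ q' := by
  rcases le_total a 1 with h | h
  · linarith [Real.rpow_le_one ha h hq, Real.rpow_nonneg ha q']
  · linarith [Real.rpow_le_rpow_of_exponent_le h hqq']

lemma exists_le_add_of_forall_lt_abs {g φ : ℝ → ℝ} (hg : Continuous g) (hφ : ∀ t, 0 ≤ φ t)
    {K : ℝ} (hK : ∀ t, K < |t| → g t ≤ φ t) : ∃ C, ∀ t, g t ≤ φ t + C := by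
  obtain ⟨B, hB⟩ := (isCompact_Icc (a := -K) (b := K)).bddAbove_image hg.continuousOn
  refine ⟨max B 0, fun t => ?_⟩
  rcases le_or_gt |t| K with ht | ht
  · linarith [hB ⟨t, abs_le.1 ht, rfl⟩, hφ t, le_max_left B 0]
  · linarith [hK t ht, le_max_right B 0]

lemma abs_sub_rpow_le_muF (hp : ∀ k ≤ T, 0 < p k) (u : ℕ → ℝ) {j : ℕ}
    (hj : j ∈ Finset.Icc 1 (T + 1)) :
    |u j - u (j - 1)| ^ p (j - 1) ≤ p (j - 1) * muF T p u := by
  have hpj := hp (j - 1) (by simp at hj; omega)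
  have := Finset.single_le_sum (f := fun k => 1 / p (k - 1) * |u k - u (k - 1)| ^ p (k - 1))
    (fun k hk => by have := hp (k - 1) (by simp at hk; omega); positivity) hj
  rw [← div_le_iff₀' hpj]
  simpa [muF, div_eq_inv_mul] using this

lemma exists_abs_rpow_le_muF (hp : ∀ k ≤ T, 0 < p k) {q : ℝ} (hq : 0 ≤ q)
    (hqp : ∀ k ≤ T, q ≤ p k) :
    ∃ C ≥ 0, ∀ u : ℕ → ℝ, u 0 = 0 → ∀ k ≤ T + 1, |u k| ^ q ≤ C * (1 + muF T p u) := by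
  obtain ⟨pM, hpM⟩ := ((Set.finite_Iic T).image p).bddAbove
  refine ⟨((T : ℝ) + 1) ^ q * max pM 1, by positivity, fun u hu k hk => ?_⟩
  obtain ⟨j, hj, hjmax⟩ := (Finset.Icc 1 (T + 1)).exists_max_image
    (fun j => |u j - u (j - 1)|) ⟨1, by simp⟩
  set d := |u j - u (j - 1)|
  have hpj : p (j - 1) ≤ max pM 1 :=
    (hpM ⟨j - 1, by simp at hj ⊢; omega, rfl⟩).trans (le_max_left _ _)
  have hsum : |u k| ≤ (T + 1) * d := by
    refine (abs_le_sum_abs_sub hu hk).trans ?_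
    simpa using Finset.sum_le_card_nsmul _ _ _ hjmax
  have hμ := muF_nonneg hp u
  calc |u k| ^ q ≤ ((T + 1) * d) ^ q := Real.rpow_le_rpow (abs_nonneg _) hsum hq
    _ = (T + 1) ^ q * d ^ q := Real.mul_rpow (by positivity) (abs_nonneg _)
    _ ≤ (T + 1) ^ q * (1 + p (j - 1) * muF T p u) := by
      gcongr
      exact (rpow_le_one_add_rpow (abs_nonneg _) hq (hqp (j - 1) (by simp at hj; omega))).trans
        (by linarith [abs_sub_rpow_le_muF hp u hj])
    _ ≤ (T + 1) ^ q * (max pM 1 * (1 + muF T p u)) := by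
      gcongr
      nlinarith [le_max_right pM 1]
    _ = _ := by ring

end Estimates

section Suprema

variable {T : ℕ} {p : ℕ → ℝ}

lemma finite_setOf_abs (u : ℕ → ℝ) : {x : ℝ | ∃ k, 1 ≤ k ∧ k ≤ T ∧ x = |u k|}.Finite :=
  ((Set.finite_Icc 1 T).image fun k => |u k|).subset <| by
    rintro _ ⟨k, h1, h2, rfl⟩
    exact ⟨k, ⟨h1, h2⟩, rfl⟩

lemma exists_supNorm_eq (hT : 1 ≤ T) (u : ℕ → ℝ) : ∃ k, 1 ≤ k ∧ k ≤ T ∧ supNorm T u = |u k| :=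
  Set.Nonempty.csSup_mem (s := {x : ℝ | ∃ k, 1 ≤ k ∧ k ≤ T ∧ x = |u k|}) ⟨_, 1, le_rfl, hT, rfl⟩
    (finite_setOf_abs u)

lemma abs_le_supNorm (u : ℕ → ℝ) {k : ℕ} (h1 : 1 ≤ k) (h2 : k ≤ T) : |u k| ≤ supNorm T u :=
  le_csSup (finite_setOf_abs u).bddAbove ⟨k, h1, h2, rfl⟩

lemma supNorm_le_sPrime (hT : 1 ≤ T) (hp : ∀ k ≤ T, 1 < p k) {s : ℝ} {u : ℕ → ℝ}
    (hu0 : u 0 = 0) (hu1 : u (T + 1) = 0) (hus : muF T p u ≤ s) :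
    supNorm T u ≤ sPrime T p s := by
  obtain ⟨C, hC0, hC⟩ := exists_abs_rpow_le_muF (fun k hk => one_pos.trans (hp k hk)) zero_le_one
    fun k hk => (hp k hk).le
  refine le_csSup ⟨C * (1 + s), ?_⟩ ⟨u, hu0, hu1, hus, rfl⟩
  rintro _ ⟨v, hv0, -, hvs, rfl⟩
  obtain ⟨k, -, hkT, hk⟩ := exists_supNorm_eq hT v
  have := hC v hv0 k (by omega)
  rw [Real.rpow_one] at this
  rw [hk]
  exact this.trans (by gcongr)

lemma rPrime_le_supNorm (hT : 1 ≤ T) {r : ℝ} {u : ℕ → ℝ} (hu0 : u 0 = 0) (hu1 : u (T + 1) = 0)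
    (hur : r ≤ muF T p u) : rPrime T p r ≤ supNorm T u := by
  refine csInf_le ⟨0, ?_⟩ ⟨u, hu0, hu1, hur, rfl⟩
  rintro _ ⟨v, -, -, -, rfl⟩
  exact (abs_nonneg _).trans (abs_le_supNorm v le_rfl hT)

variable {f : ℕ → ℝ → ℝ} {k : ℕ}

lemma hasDerivAt_Fint (hf : Continuous (f k)) (t : ℝ) : HasDerivAt (Fint f k) (f k t) t :=
  (hf.integral_hasStrictDerivAt 0 t).hasDerivAt

lemma contDiff_Fint (hf : Continuous (f k)) : ContDiff ℝ 1 (Fint f k) :=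
  contDiff_one_iff_deriv.2 ⟨fun t => (hasDerivAt_Fint hf t).differentiableAt,
    by rwa [funext fun t => (hasDerivAt_Fint hf t).deriv]⟩

lemma bddAbove_setOf_Fint (hf : Continuous (f k)) (σ : ℝ) :
    BddAbove {y : ℝ | ∃ t : ℝ, |t| ≤ σ ∧ y = Fint f k t} :=
  (isCompact_Icc.image (contDiff_Fint hf).continuous).bddAbove.mono <| by
    rintro _ ⟨t, ht, rfl⟩
    exact ⟨t, abs_le.1 ht, rfl⟩

lemma Fint_le_supFle (hf : Continuous (f k)) {σ t : ℝ} (ht : |t| ≤ σ) :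
    Fint f k t ≤ supFle f k σ :=
  le_csSup (bddAbove_setOf_Fint hf σ) ⟨t, ht, rfl⟩

lemma Fint_le_supFbetween (hf : Continuous (f k)) {ρ σ t : ℝ} (hρt : ρ ≤ |t|) (ht : |t| ≤ σ) :
    Fint f k t ≤ supFbetween f k ρ σ :=
  le_csSup ((bddAbove_setOf_Fint hf σ).mono <| by rintro _ ⟨t, -, ht, rfl⟩; exact ⟨t, ht, rfl⟩)
    ⟨t, hρt, ht, rfl⟩

end Suprema

section GridModel

variable {T : ℕ} {p : ℕ → ℝ} {f : ℕ → ℝ → ℝ} {lam : ℝ}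

/-- `H` is modelled on `EuclideanSpace ℝ (Fin T)`: the coordinate `i` holds the value `u (i + 1)`,
and `gridCoord T k` reads off `u k`, which is `0` at `k = 0` and for `k > T`. -/
noncomputable def gridCoord (T k : ℕ) : EuclideanSpace ℝ (Fin T) →L[ℝ] ℝ :=
  if h : 1 ≤ k ∧ k ≤ T then EuclideanSpace.proj (⟨k - 1, by omega⟩ : Fin T) else 0

@[simp] lemma gridCoord_zero (x : EuclideanSpace ℝ (Fin T)) : gridCoord T 0 x = 0 := by
  simp [gridCoord]

@[simp] lemma gridCoord_succ_self (x : EuclideanSpace ℝ (Fin T)) : gridCoord T (T + 1) x = 0 := by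
  simp [gridCoord]

lemma gridCoord_of_mem {k : ℕ} (h1 : 1 ≤ k) (h2 : k ≤ T) (x : EuclideanSpace ℝ (Fin T)) :
    gridCoord T k x = x ⟨k - 1, by omega⟩ := by
  simp [gridCoord, h1, h2]

@[simp] lemma gridCoord_succ (i : Fin T) (x : EuclideanSpace ℝ (Fin T)) :
    gridCoord T (i + 1) x = x i := by
  simp [gridCoord_of_mem (Nat.le_add_left 1 i) i.2]

lemma exists_gridCoord_eq (v : ℕ → ℝ) :
    ∃ y : EuclideanSpace ℝ (Fin T), ∀ k, 1 ≤ k → k ≤ T → gridCoord T k y = v k :=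
  ⟨WithLp.toLp 2 fun i => v (i + 1), fun k h1 h2 => by
    simp [gridCoord_of_mem h1 h2, Nat.sub_add_cancel h1]⟩

lemma exists_gridCoord_eq_of_boundary {v : ℕ → ℝ} (hv0 : v 0 = 0) (hv1 : v (T + 1) = 0) :
    ∃ y : EuclideanSpace ℝ (Fin T), ∀ k ≤ T + 1, gridCoord T k y = v k := by
  obtain ⟨y, hy⟩ := exists_gridCoord_eq v
  refine ⟨y, fun k hk => ?_⟩
  rcases Nat.eq_zero_or_pos k with rfl | hk0
  · simp [hv0]
  rcases hk.lt_or_eq with hk | rfl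
  · exact hy k hk0 (by omega)
  · simp [hv1]

lemma distinctH_of_ne {x y : EuclideanSpace ℝ (Fin T)} (h : x ≠ y) :
    DistinctH T (fun k => gridCoord T k x) fun k => gridCoord T k y := by
  by_contra hxy
  refine h (PiLp.ext fun i => ?_)
  by_contra hi
  exact hxy ⟨i + 1, by omega, by omega, by simpa using hi⟩

lemma nonzeroH_of_ne_zero {x : EuclideanSpace ℝ (Fin T)} (h : x ≠ 0) :
    NonzeroH T fun k => gridCoord T k x := by
  simpa [DistinctH, NonzeroH] using distinctH_of_ne h

noncomputable def gridMu (T : ℕ) (p : ℕ → ℝ) (x : EuclideanSpace ℝ (Fin T)) : ℝ :=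
  muF T p fun k => gridCoord T k x

noncomputable def gridPotential (T : ℕ) (f : ℕ → ℝ → ℝ) (x : EuclideanSpace ℝ (Fin T)) : ℝ :=
  ∑ k ∈ Finset.Icc 1 T, Fint f k (gridCoord T k x)

/-- `E_λ = μ + λ J` on the model space; `J = -gridPotential`. -/
noncomputable def gridEnergy (T : ℕ) (p : ℕ → ℝ) (f : ℕ → ℝ → ℝ) (lam : ℝ)
    (x : EuclideanSpace ℝ (Fin T)) : ℝ :=
  gridMu T p x - lam * gridPotential T f x

lemma gridMu_nonneg (hp : ∀ k ≤ T, 1 < p k) (x : EuclideanSpace ℝ (Fin T)) : 0 ≤ gridMu T p x :=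
  muF_nonneg (fun k hk => one_pos.trans (hp k hk)) _

lemma gridMu_zero (hp : ∀ k ≤ T, 1 < p k) : gridMu T p 0 = 0 := by
  unfold gridMu muF
  refine Finset.sum_eq_zero fun k hk => ?_
  have := hp (k - 1) (by simp at hk; omega)
  simp [Real.zero_rpow (one_pos.trans this).ne']

lemma gridEnergy_zero (hp : ∀ k ≤ T, 1 < p k) : gridEnergy T p f lam 0 = 0 := by
  simp [gridEnergy, gridMu_zero hp, gridPotential, Fint]

lemma contDiff_abs_rpow {q : ℝ} (hq : 1 < q) : ContDiff ℝ 1 fun t : ℝ => |t| ^ q := by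
  simpa using contDiff_norm_rpow (E := ℝ) hq

lemma hasFDerivAt_gridMu (hp : ∀ k ≤ T, 1 < p k) (x : EuclideanSpace ℝ (Fin T)) :
    HasFDerivAt (gridMu T p)
      (∑ k ∈ Finset.Icc 1 (T + 1),
        (|gridCoord T k x - gridCoord T (k - 1) x| ^ (p (k - 1) - 2) *
          (gridCoord T k x - gridCoord T (k - 1) x)) •
          (gridCoord T k - gridCoord T (k - 1))) x := by
  unfold gridMu muF
  refine HasFDerivAt.fun_sum fun k hk => ?_
  have hq := hp (k - 1) (by simp at hk; omega)
  set L := gridCoord T k - gridCoord T (k - 1)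
  refine (((hasDerivAt_abs_rpow (L x) hq).comp_hasFDerivAt x L.hasFDerivAt).const_mul
    (1 / p (k - 1))).congr_fderiv ?_
  rw [smul_smul]
  congr 1
  field_simp
  exact mul_comm _ _

lemma hasFDerivAt_gridPotential (hf : ∀ k, 1 ≤ k → k ≤ T → Continuous (f k))
    (x : EuclideanSpace ℝ (Fin T)) :
    HasFDerivAt (gridPotential T f)
      (∑ k ∈ Finset.Icc 1 T, f k (gridCoord T k x) • gridCoord T k) x :=
  HasFDerivAt.fun_sum fun k hk => by
    simp only [Finset.mem_Icc] at hk
    exact (hasDerivAt_Fint (hf k hk.1 hk.2) _).comp_hasFDerivAt x (gridCoord T k).hasFDerivAt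

lemma contDiff_gridMu (hp : ∀ k ≤ T, 1 < p k) : ContDiff ℝ 1 (gridMu T p) := by
  unfold gridMu muF
  exact ContDiff.sum fun k hk => contDiff_const.mul <|
    (contDiff_abs_rpow (hp (k - 1) (by simp at hk; omega))).comp
      ((gridCoord T k).contDiff.sub (gridCoord T (k - 1)).contDiff)

lemma contDiff_gridEnergy (hp : ∀ k ≤ T, 1 < p k)
    (hf : ∀ k, 1 ≤ k → k ≤ T → Continuous (f k)) (lam : ℝ) :
    ContDiff ℝ 1 (gridEnergy T p f lam) := by
  unfold gridEnergy gridPotential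
  exact (contDiff_gridMu hp).sub <| contDiff_const.mul <| ContDiff.sum fun k hk => by
    simp only [Finset.mem_Icc] at hk
    exact (contDiff_Fint (hf k hk.1 hk.2)).comp (gridCoord T k).contDiff

lemma isCriticalPoint_of_fderiv_gridEnergy_eq_zero (hp : ∀ k ≤ T, 1 < p k)
    (hf : ∀ k, 1 ≤ k → k ≤ T → Continuous (f k)) {x : EuclideanSpace ℝ (Fin T)}
    (hx : fderiv ℝ (gridEnergy T p f lam) x = 0) :
    IsCriticalPoint T p f lam fun k => gridCoord T k x := by
  refine ⟨gridCoord_zero x, gridCoord_succ_self x, fun v hv0 hv1 => ?_⟩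
  obtain ⟨y, hy⟩ := exists_gridCoord_eq_of_boundary hv0 hv1
  have hD := ((hasFDerivAt_gridMu hp x).sub
    ((hasFDerivAt_gridPotential hf x).const_mul lam)).fderiv
  have := congrArg (· y) (hD.symm.trans hx)
  simp only [sub_apply, FunLike.coe_sum, Finset.sum_apply, smul_apply, smul_eq_mul,
    zero_apply, sub_eq_zero] at this
  refine (Finset.sum_congr rfl fun k hk => ?_).trans
    (this.trans (congrArg (lam * ·) (Finset.sum_congr rfl fun k hk => ?_)))
  · simp only [Finset.mem_Icc] at hk
    rw [hy k hk.2, hy (k - 1) (by omega)]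
  · simp only [Finset.mem_Icc] at hk
    rw [hy k (by omega)]

lemma isCompact_gridMu_le (hp : ∀ k ≤ T, 1 < p k) (M : ℝ) :
    IsCompact {x : EuclideanSpace ℝ (Fin T) | gridMu T p x ≤ M} := by
  obtain ⟨A, hA0, hA⟩ := exists_abs_rpow_le_muF (fun k hk => one_pos.trans (hp k hk)) zero_le_one
    fun k hk => (hp k hk).le
  have hbox := (PiLp.continuousLinearEquiv 2 ℝ fun _ : Fin T => ℝ).toHomeomorph.isCompact_preimage.2
    (isCompact_univ_pi fun _ => isCompact_Icc (a := -(A * (1 + M))) (b := A * (1 + M)))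
  refine hbox.of_isClosed_subset (isClosed_le (contDiff_gridMu hp).continuous continuous_const)
    fun x hx => mem_univ_pi.2 fun i => abs_le.1 ?_
  have := hA (fun k => gridCoord T k x) (gridCoord_zero x) (i + 1) (by omega)
  simp only [Real.rpow_one, gridCoord_succ] at this
  exact this.trans (mul_le_mul_of_nonneg_left (add_le_add le_rfl hx) hA0)

lemma exists_le_gridEnergy (hp : ∀ k ≤ T, 1 < p k) (hf : ∀ k, 1 ≤ k → k ≤ T → Continuous (f k))
    {pm : ℝ} (hpm0 : 0 ≤ pm) (hpm : ∀ k ≤ T, pm ≤ p k)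
    (h1 : ∀ k, 1 ≤ k → k ≤ T → ∀ ε : ℝ, 0 < ε → ∃ K > (0:ℝ), ∀ t : ℝ, K < |t| →
      Fint f k t ≤ ε * |t| ^ pm)
    (hlam : 0 ≤ lam) : ∃ C, ∀ x, gridMu T p x / 2 - C ≤ gridEnergy T p f lam x := by
  obtain ⟨A, hA0, hA⟩ := exists_abs_rpow_le_muF (fun k hk => one_pos.trans (hp k hk)) hpm0 hpm
  set ε := 1 / (2 * (lam * T * A + 1))
  have hε : 0 < ε := by positivity
  have hB : lam * ε * (T * A) ≤ 1 / 2 := by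
    rw [show lam * ε * (T * A) = lam * T * A / (2 * (lam * T * A + 1)) by ring,
      div_le_iff₀ (by positivity)]
    linarith
  choose! C hC using fun k (hk : k ∈ Finset.Icc 1 T) =>
    have ⟨_, _, hK⟩ := h1 k (Finset.mem_Icc.1 hk).1 (Finset.mem_Icc.1 hk).2 ε hε
    exists_le_add_of_forall_lt_abs (contDiff_Fint (hf k (Finset.mem_Icc.1 hk).1
      (Finset.mem_Icc.1 hk).2)).continuous (fun t => by positivity) hK
  refine ⟨1 / 2 + lam * ∑ k ∈ Finset.Icc 1 T, C k, fun x => ?_⟩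
  have hP : gridPotential T f x ≤ ε * (T * A * (1 + gridMu T p x)) + ∑ k ∈ Finset.Icc 1 T, C k :=
    calc gridPotential T f x
        ≤ ∑ k ∈ Finset.Icc 1 T, (ε * |gridCoord T k x| ^ pm + C k) :=
          Finset.sum_le_sum fun k hk => hC k hk _
      _ = ε * ∑ k ∈ Finset.Icc 1 T, |gridCoord T k x| ^ pm + ∑ k ∈ Finset.Icc 1 T, C k := by
          rw [Finset.sum_add_distrib, Finset.mul_sum]
      _ ≤ _ := by
          gcongr
          have := Finset.sum_le_card_nsmul (Finset.Icc 1 T) (fun k => |gridCoord T k x| ^ pm) _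
            fun k hk => hA (fun k => gridCoord T k x) (gridCoord_zero x) k
              (by simp only [Finset.mem_Icc] at hk; omega)
          simpa [mul_assoc, gridMu] using this
  have := mul_le_mul_of_nonneg_left hP hlam
  have := mul_le_mul_of_nonneg_right hB (gridMu_nonneg hp x)
  unfold gridEnergy
  nlinarith

lemma isCompact_gridEnergy_le (hp : ∀ k ≤ T, 1 < p k) (hf : ∀ k, 1 ≤ k → k ≤ T → Continuous (f k))
    {pm : ℝ} (hpm0 : 0 ≤ pm) (hpm : ∀ k ≤ T, pm ≤ p k)
    (h1 : ∀ k, 1 ≤ k → k ≤ T → ∀ ε : ℝ, 0 < ε → ∃ K > (0:ℝ), ∀ t : ℝ, K < |t| →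
      Fint f k t ≤ ε * |t| ^ pm)
    (hlam : 0 ≤ lam) (M : ℝ) :
    IsCompact {x : EuclideanSpace ℝ (Fin T) | gridEnergy T p f lam x ≤ M} := by
  obtain ⟨C, hC⟩ := exists_le_gridEnergy hp hf hpm0 hpm h1 hlam
  exact (isCompact_gridMu_le hp (2 * (M + C))).of_isClosed_subset
    (isClosed_le (contDiff_gridEnergy hp hf lam).continuous continuous_const)
    fun x (hx : gridEnergy T p f lam x ≤ M) => show gridMu T p x ≤ 2 * (M + C) by linarith [hC x]

lemma gridPotential_le_of_gridMu_le (hT : 1 ≤ T) (hp : ∀ k ≤ T, 1 < p k)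
    (hf : ∀ k, 1 ≤ k → k ≤ T → Continuous (f k)) {s : ℝ} {x : EuclideanSpace ℝ (Fin T)}
    (hxs : gridMu T p x ≤ s) :
    gridPotential T f x ≤ ∑ k ∈ Finset.Icc 1 T, supFle f k (sPrime T p s) := by
  have hsup := supNorm_le_sPrime hT hp (gridCoord_zero x) (gridCoord_succ_self x) hxs
  refine Finset.sum_le_sum fun k hk => ?_
  simp only [Finset.mem_Icc] at hk
  exact Fint_le_supFle (hf k hk.1 hk.2) ((abs_le_supNorm _ hk.1 hk.2).trans hsup)

lemma gridPotential_nonpos_of_mem_annulus (hT : 1 ≤ T) (hp : ∀ k ≤ T, 1 < p k)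
    (hf : ∀ k, 1 ≤ k → k ≤ T → Continuous (f k)) {r s : ℝ}
    (h3 : ∀ k, 1 ≤ k → k ≤ T →
      supFbetween f k (rPrime T p r) (sPrime T p s) ≤
        -∑ j ∈ (Finset.Icc 1 T).erase k, supFle f j (sPrime T p s))
    {x : EuclideanSpace ℝ (Fin T)} (hrx : r ≤ gridMu T p x) (hxs : gridMu T p x ≤ s) :
    gridPotential T f x ≤ 0 := by
  have hsup := supNorm_le_sPrime hT hp (gridCoord_zero x) (gridCoord_succ_self x) hxs
  have hinf := rPrime_le_supNorm hT (gridCoord_zero x) (gridCoord_succ_self x) hrx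
  -- the coordinate where `‖u‖_∞` is attained lies in the annulus `r′ ≤ |t| ≤ s′`
  obtain ⟨k₀, hk₀1, hk₀T, hk₀⟩ := exists_supNorm_eq hT fun k => gridCoord T k x
  have hk₀mem : k₀ ∈ Finset.Icc 1 T := Finset.mem_Icc.2 ⟨hk₀1, hk₀T⟩
  have hmax := Fint_le_supFbetween (hf k₀ hk₀1 hk₀T) (hk₀ ▸ hinf) (hk₀ ▸ hsup)
  have hrest : ∑ j ∈ (Finset.Icc 1 T).erase k₀, Fint f j (gridCoord T j x) ≤
      ∑ j ∈ (Finset.Icc 1 T).erase k₀, supFle f j (sPrime T p s) := by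
    refine Finset.sum_le_sum fun j hj => ?_
    have hj := Finset.mem_Icc.1 (Finset.mem_of_mem_erase hj)
    exact Fint_le_supFle (hf j hj.1 hj.2) ((abs_le_supNorm _ hj.1 hj.2).trans hsup)
  unfold gridPotential
  rw [← Finset.add_sum_erase _ _ hk₀mem]
  linarith [h3 k₀ hk₀1 hk₀T]

lemma le_gridEnergy_of_mem_annulus (hT : 1 ≤ T) (hp : ∀ k ≤ T, 1 < p k)
    (hf : ∀ k, 1 ≤ k → k ≤ T → Continuous (f k)) {r s : ℝ}
    (h3 : ∀ k, 1 ≤ k → k ≤ T →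
      supFbetween f k (rPrime T p r) (sPrime T p s) ≤
        -∑ j ∈ (Finset.Icc 1 T).erase k, supFle f j (sPrime T p s))
    (hlam : 0 ≤ lam) {x : EuclideanSpace ℝ (Fin T)} (hrx : r ≤ gridMu T p x)
    (hxs : gridMu T p x ≤ s) : r ≤ gridEnergy T p f lam x := by
  have := mul_nonpos_of_nonneg_of_nonpos hlam
    (gridPotential_nonpos_of_mem_annulus hT hp hf h3 hrx hxs)
  unfold gridEnergy
  linarith

lemma exists_gridEnergy_lt (hT : 1 ≤ T) (hp : ∀ k ≤ T, 1 < p k)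
    (hf : ∀ k, 1 ≤ k → k ≤ T → Continuous (f k)) {s : ℝ}
    (h2 : ∃ t : ℕ → ℝ, ∑ k ∈ Finset.Icc 1 T, supFle f k (sPrime T p s) <
      ∑ k ∈ Finset.Icc 1 T, Fint f k (t k)) :
    ∃ lam > 0, ∃ w, ∀ x, gridMu T p x ≤ s → gridEnergy T p f lam w < gridEnergy T p f lam x := by
  obtain ⟨t, ht⟩ := h2
  obtain ⟨w, hw⟩ := exists_gridCoord_eq (T := T) t
  have hPw : gridPotential T f w = ∑ k ∈ Finset.Icc 1 T, Fint f k (t k) :=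
    Finset.sum_congr rfl fun k hk => by rw [hw k (Finset.mem_Icc.1 hk).1 (Finset.mem_Icc.1 hk).2]
  set S := ∑ k ∈ Finset.Icc 1 T, supFle f k (sPrime T p s)
  -- `λ` is large enough that `E_λ w = -λ S - 1`, below the lower bound `-λ S` on `{μ ≤ s}`
  have hgap : 0 < gridPotential T f w - S := by linarith
  set lam := (gridMu T p w + 1) / (gridPotential T f w - S)
  have hlam : 0 < lam := div_pos (by linarith [gridMu_nonneg hp w]) hgap
  have hlamw : lam * (gridPotential T f w - S) = gridMu T p w + 1 := div_mul_cancel₀ _ hgap.ne'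
  refine ⟨lam, hlam, w, fun x hxs => ?_⟩
  have := mul_le_mul_of_nonneg_left (gridPotential_le_of_gridMu_le hT hp hf hxs) hlam.le
  unfold gridEnergy
  nlinarith [gridMu_nonneg hp x]

end GridModel

theorem stmt17 (T : ℕ) (hT : 1 ≤ T) (p : ℕ → ℝ) (hp : ∀ k ≤ T + 1, 1 < p k)
    (pm : ℝ) (hpm : IsLeast (p '' Set.Icc 0 (T + 1)) pm)
    (f : ℕ → ℝ → ℝ) (hf : ∀ k, 1 ≤ k → k ≤ T → Continuous (f k))
    (r s : ℝ) (hr : 0 < r) (hrs : r < s)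
    -- (1): limsup_{|t|→∞} F(k,t)/|t|^{p⁻} ≤ 0
    (h1 : ∀ k, 1 ≤ k → k ≤ T → ∀ ε : ℝ, 0 < ε → ∃ K > (0:ℝ), ∀ t : ℝ, K < |t| →
      Fint f k t ≤ ε * |t| ^ pm)
    -- (2): Σ_k sup_{|t|≤s′} F(k,t) < Σ_k sup_{t∈ℝ} F(k,t)
    (h2 : ∃ t : ℕ → ℝ, ∑ k ∈ Finset.Icc 1 T, supFle f k (sPrime T p s) <
      ∑ k ∈ Finset.Icc 1 T, Fint f k (t k))
    -- (3): sup_{r′≤|t|≤s′} F(k,t) ≤ −Σ_{h≠k} sup_{|t|≤s′} F(h,t)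
    (h3 : ∀ k, 1 ≤ k → k ≤ T →
      supFbetween f k (rPrime T p r) (sPrime T p s) ≤
        -∑ j ∈ (Finset.Icc 1 T).erase k, supFle f j (sPrime T p s)) :
    ∃ lamStar > (0:ℝ), ∃ u₁ u₂ u₃ : ℕ → ℝ,
      IsCriticalPoint T p f lamStar u₁ ∧ IsCriticalPoint T p f lamStar u₂ ∧
      IsCriticalPoint T p f lamStar u₃ ∧
      DistinctH T u₁ u₂ ∧ DistinctH T u₁ u₃ ∧ DistinctH T u₂ u₃ ∧
      NonzeroH T u₂ ∧ NonzeroH T u₃ := by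
  have hp' : ∀ k ≤ T, 1 < p k := fun k hk => hp k (by omega)
  have hpm0 : 0 ≤ pm := by
    obtain ⟨k, hk, rfl⟩ := hpm.1
    exact zero_le_one.trans (hp k hk.2).le
  have hpmp : ∀ k ≤ T, pm ≤ p k := fun k hk => hpm.2 ⟨k, ⟨k.zero_le, by omega⟩, rfl⟩
  obtain ⟨lam, hlam, hlow⟩ := exists_gridEnergy_lt hT hp' hf h2
  have hE0 : gridEnergy T p f lam 0 = 0 := gridEnergy_zero hp'
  obtain ⟨x₁, x₂, x₃, hx₁, hx₂, hx₃, h₂₁, h₁, h₃⟩ := exists_three_critical_points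
    (contDiff_gridEnergy hp' hf lam) (isCompact_gridEnergy_le hp' hf hpm0 hpmp h1 hlam.le)
    (contDiff_gridMu hp').continuous (isCompact_gridMu_le hp' s) hr hrs.le hE0
    (by rw [gridMu_zero hp']; linarith)
    (fun x => le_gridEnergy_of_mem_annulus hT hp' hf h3 hlam.le) hlow
  refine ⟨lam, hlam, _, _, _, isCriticalPoint_of_fderiv_gridEnergy_eq_zero hp' hf hx₁,
    isCriticalPoint_of_fderiv_gridEnergy_eq_zero hp' hf hx₂,
    isCriticalPoint_of_fderiv_gridEnergy_eq_zero hp' hf hx₃, distinctH_of_ne ?_,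
    distinctH_of_ne ?_, distinctH_of_ne ?_, nonzeroH_of_ne_zero ?_, nonzeroH_of_ne_zero ?_⟩ <;>
  rintro rfl <;> linarith
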